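/- arXiv:1502.04116 — 4 statements merged into one kernel-verified Lean document; each statement's English description precedes it below -/
import Mathlib

section
/- Let X : [0,T] → ℝ^d be a C^1 path, let f : ℝ^e → L(ℝ^d, ℝ^e) be a smooth (C^∞) vector field, and let Y : [0,T] → ℝ^e solve the controlled differential equation Y'_t = f(Y_t)(X'_t) with Y_0 = y_0. Then for every N ≥ 1 and every 0 ≤ s ≤ t ≤ T, the Taylor remainder satisfies the identity Y_t − Y_s − Σ_{k=1}^{N} f^{∘k}(Y_s)(X^k_{s,t}) = ∫_{s<s_1<⋯<s_N<t} (f^{∘N}(Y_{s_1}) − f^{∘N}(Y_s))(X'(s_1) ⊗ ⋯ ⊗ X'(s_N)) ds_1⋯ds_N. -/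
open MeasureTheory

noncomputable section

/-- The `k`-th tensor power of `ℝ^d`, identified with `ℝ^(d^k)` with the Euclidean norm. -/
abbrev Tpow (d k : ℕ) : Type := EuclideanSpace ℝ (Fin k → Fin d)

/-- Tensor product of tensor-power vectors. -/
def tmul {d k l : ℕ} (v : Tpow d k) (w : Tpow d l) : Tpow d (k + l) :=
  WithLp.toLp 2 (fun i => v (fun j => i (Fin.castAdd l j)) * w (fun j => i (Fin.natAdd k j)))

/-- Reindexing cast between tensor powers of equal order. -/
def tcast {d k l : ℕ} (h : k = l) (v : Tpow d k) : Tpow d l :=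
  WithLp.toLp 2 (fun i => v (fun j => i (Fin.cast h j)))

/-- Tensor product `a ⊗ w` of a vector of `ℝ^d` with a `k`-tensor. -/
def consT {d k : ℕ} (a : EuclideanSpace ℝ (Fin d)) (w : Tpow d k) : Tpow d (k + 1) :=
  WithLp.toLp 2 (fun i => a (i 0) * w (fun j => i j.succ))

/-- Iterated integrals `X^k_{s,t} = ∫_{s<s₁<⋯<s_k<t} X'(s₁) ⊗ ⋯ ⊗ X'(s_k) ds₁⋯ds_k`
of a C¹ path, defined recursively: `X^{k+1}_{s,t} = ∫_s^t X^k_{s,u} ⊗ X'(u) du`. -/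
def iterInt {d : ℕ} (X : ℝ → EuclideanSpace ℝ (Fin d)) : (k : ℕ) → ℝ → ℝ → Tpow d k
  | 0, _, _ => WithLp.toLp 2 (fun _ => 1)
  | (k+1), s, t => WithLp.toLp 2 (fun i =>
      ∫ u in s..t, iterInt X k s u (fun j => i j.castSucc) * deriv X u (i (Fin.last k)))

/-- Slicing a `(k+1)`-tensor along first coordinate `j`. -/
def sliceT {d : ℕ} (k : ℕ) (j : Fin d) : Tpow d (k + 1) →L[ℝ] Tpow d k :=
  LinearMap.toContinuousLinearMap
    { toFun := fun w => (WithLp.toLp 2 (fun v => w (Fin.cons j v)) : Tpow d k)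
      map_add' := fun _ _ => rfl
      map_smul' := fun _ _ => rfl }

/-- `f^{∘k}` defined inductively: `f^{∘0}(y)(v) = v·y` (so that `f^{∘1} = f` under
`(ℝ^d)^{⊗1} ≅ ℝ^d`), and `f^{∘(k+1)}(y)(a ⊗ v) = (D(f^{∘k})(y)(f(y)(a)))(v)`, encoded by
decomposing a `(k+1)`-tensor along its first coordinate. -/
def fcirc {d e : ℕ}
    (f : EuclideanSpace ℝ (Fin e) → (EuclideanSpace ℝ (Fin d) →L[ℝ] EuclideanSpace ℝ (Fin e))) :
    (k : ℕ) → EuclideanSpace ℝ (Fin e) → (Tpow d k →L[ℝ] EuclideanSpace ℝ (Fin e))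
  | 0 => fun y => LinearMap.toContinuousLinearMap
      { toFun := fun v => v (fun i => i.elim0) • y
        map_add' := fun v v' => by simp [PiLp.add_apply, add_smul]
        map_smul' := fun c v => by simp [PiLp.smul_apply, smul_smul] }
  | (k+1) => fun y =>
      ∑ j : Fin d, ((fderiv ℝ (fcirc f k) y) (f y (EuclideanSpace.single j 1))).comp (sliceT k j)

section Aux
open Set

/-! ### Generic auxiliary lemmas -/

lemma cont_eucl {ι : Type*} [Fintype ι] {α : Type*} [TopologicalSpace α]
    {f : α → EuclideanSpace ℝ ι} (h : ∀ i, Continuous fun x => f x i) : Continuous f :=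
  (PiLp.continuous_toLp 2 _).comp (continuous_pi h)

lemma eucl_integral_apply {ι : Type*} [Fintype ι] (g : ℝ → EuclideanSpace ℝ ι) {a b : ℝ}
    (h : IntervalIntegrable g MeasureTheory.volume a b) (i : ι) :
    (∫ u in a..b, g u) i = ∫ u in a..b, g u i :=
  ((EuclideanSpace.proj i).intervalIntegral_comp_comm h).symm

variable {E : Type*} [NormedAddCommGroup E] [NormedSpace ℝ E]

omit [NormedSpace ℝ E] in
lemma triangle_swap_aux : True := trivial

lemma triangle_swap [CompleteSpace E] {s t : ℝ} (hst : s ≤ t) (g : ℝ → ℝ → E)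
    (hg : ContinuousOn (fun p : ℝ × ℝ => g p.1 p.2) (Icc s t ×ˢ Icc s t)) :
    ∫ u in s..t, (∫ r in s..u, g r u) = ∫ r in s..t, ∫ u in r..t, g r u := by
  set K : Set (ℝ × ℝ) := {p : ℝ × ℝ | s ≤ p.1 ∧ p.1 ≤ p.2 ∧ p.2 ≤ t} with hK
  have hKsub : K ⊆ Icc s t ×ˢ Icc s t := by
    rintro ⟨r, u⟩ ⟨h1, h2, h3⟩
    exact ⟨⟨h1, h2.trans h3⟩, ⟨h1.trans h2, h3⟩⟩
  have hKcl : IsClosed K := by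
    apply IsClosed.inter (isClosed_le continuous_const continuous_fst)
    exact (isClosed_le continuous_fst continuous_snd).inter
      (isClosed_le continuous_snd continuous_const)
  have hKm : MeasurableSet K := hKcl.measurableSet
  have hKc : IsCompact K :=
    (isCompact_Icc.prod isCompact_Icc).of_isClosed_subset hKcl hKsub
  set F : ℝ × ℝ → E := K.indicator (fun p => g p.1 p.2) with hF
  have hFi : MeasureTheory.Integrable F
      (MeasureTheory.volume : MeasureTheory.Measure (ℝ × ℝ)) := by
    rw [hF, MeasureTheory.integrable_indicator_iff hKm]
    exact ((hg.mono hKsub).integrableOn_compact hKc)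
  set hfun : ℝ → E := fun u => ∫ r, F (r, u) with hfun_def
  set kfun : ℝ → E := fun r => ∫ u, F (r, u) with kfun_def
  have hval : ∀ u ≤ t, hfun u = ∫ r in Icc s u, g r u := by
    intro u hu
    have : (fun r => F (r, u)) = (Icc s u).indicator (fun r => g r u) := by
      funext r
      simp only [hF, indicator_apply, hK, mem_setOf_eq, mem_Icc]
      apply if_congr _ rfl rfl
      exact ⟨fun h => ⟨h.1, h.2.1⟩, fun h => ⟨h.1, h.2, hu⟩⟩
    rw [hfun_def]
    simp only [this]
    rw [MeasureTheory.integral_indicator measurableSet_Icc]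
  have kval : ∀ r, s ≤ r → (kfun r = ∫ u in Icc r t, g r u) := by
    intro r hr
    have : (fun u => F (r, u)) = (Icc r t).indicator (fun u => g r u) := by
      funext u
      simp only [hF, indicator_apply, hK, mem_setOf_eq, mem_Icc]
      apply if_congr _ rfl rfl
      exact ⟨fun h => ⟨h.2.1, h.2.2⟩, fun h => ⟨hr, h.1, h.2⟩⟩
    rw [kfun_def]
    simp only [this]
    rw [MeasureTheory.integral_indicator measurableSet_Icc]
  have hL : ∫ u in s..t, (∫ r in s..u, g r u) = ∫ u, hfun u := by
    rw [intervalIntegral.integral_of_le hst,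
      ← MeasureTheory.setIntegral_eq_integral_of_forall_compl_eq_zero
        (s := Icc s t) (f := hfun),
      MeasureTheory.integral_Icc_eq_integral_Ioc]
    · apply MeasureTheory.setIntegral_congr_fun measurableSet_Ioc
      intro u hu
      show (∫ r in s..u, g r u) = hfun u
      rw [intervalIntegral.integral_of_le hu.1.le, hval u hu.2,
        MeasureTheory.integral_Icc_eq_integral_Ioc]
    · intro u hu
      rw [mem_Icc, not_and_or, not_le, not_le] at hu
      rcases hu with hu | hu
      · rw [hval u (hu.le.trans hst),
          show (MeasureTheory.volume.restrict (Icc s u)) = 0 from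
            MeasureTheory.Measure.restrict_eq_zero.2 (by simp [Real.volume_Icc, hu.le]),
          MeasureTheory.integral_zero_measure]
      · rw [hfun_def]
        have : (fun r => F (r, u)) = fun _ => (0 : E) := by
          funext r
          apply indicator_of_notMem
          rintro ⟨_, _, h3⟩
          exact absurd h3 (not_le.2 hu)
        simp only [this, MeasureTheory.integral_zero]
  have hR : ∫ r in s..t, (∫ u in r..t, g r u) = ∫ r, kfun r := by
    rw [intervalIntegral.integral_of_le hst,
      ← MeasureTheory.setIntegral_eq_integral_of_forall_compl_eq_zero
        (s := Icc s t) (f := kfun),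
      MeasureTheory.integral_Icc_eq_integral_Ioc]
    · apply MeasureTheory.setIntegral_congr_fun measurableSet_Ioc
      intro r hr
      show (∫ u in r..t, g r u) = kfun r
      rw [intervalIntegral.integral_of_le hr.2, kval r hr.1.le,
        MeasureTheory.integral_Icc_eq_integral_Ioc]
    · intro r hr
      rw [mem_Icc, not_and_or, not_le, not_le] at hr
      rcases hr with hr | hr
      · rw [kfun_def]
        have : (fun u => F (r, u)) = fun _ => (0 : E) := by
          funext u
          apply indicator_of_notMem
          rintro ⟨h1, _, _⟩
          exact absurd h1 (not_le.2 hr)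
        simp only [this, MeasureTheory.integral_zero]
      · rw [kval r (hst.trans hr.le),
          show (MeasureTheory.volume.restrict (Icc r t)) = 0 from
            MeasureTheory.Measure.restrict_eq_zero.2 (by simp [Real.volume_Icc, hr.le]),
          MeasureTheory.integral_zero_measure]
  rw [hL, hR]
  rw [hfun_def, kfun_def]
  exact (MeasureTheory.integral_integral_swap (f := fun r u => F (r, u)) (by exact hFi)).symm

end Aux

section IterInt
open Set

variable {d : ℕ} {X : ℝ → EuclideanSpace ℝ (Fin d)}

lemma continuous_iterInt (hX' : Continuous (deriv X)) (k : ℕ) (i : Fin k → Fin d) :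
    Continuous fun p : ℝ × ℝ => iterInt X k p.1 p.2 i := by
  induction k with
  | zero => exact (continuous_const : Continuous fun _ : ℝ × ℝ => (1:ℝ))
  | succ k ih =>
    have hG : Continuous fun q : ℝ × ℝ =>
        iterInt X k q.1 q.2 (fun j => i j.castSucc) * deriv X q.2 (i (Fin.last k)) := by
      apply (ih _).mul
      exact ((EuclideanSpace.proj _).continuous.comp (hX'.comp continuous_snd))
    have h2 : ∀ (c : ℝ) (a b : ℝ), IntervalIntegrable
        (fun u => iterInt X k c u (fun j => i j.castSucc) * deriv X u (i (Fin.last k)))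
        MeasureTheory.volume a b := by
      intro c a b
      exact (hG.comp (continuous_const.prodMk continuous_id)).intervalIntegrable a b
    have hGu : Continuous fun q : (ℝ × ℝ) × ℝ =>
        iterInt X k q.1.1 q.2 (fun j => i j.castSucc) * deriv X q.2 (i (Fin.last k)) :=
      hG.comp ((continuous_fst.comp continuous_fst).prodMk continuous_snd)
    have c1 : Continuous fun p : ℝ × ℝ => ∫ u in (0:ℝ)..p.2,
        iterInt X k p.1 u (fun j => i j.castSucc) * deriv X u (i (Fin.last k)) :=
      intervalIntegral.continuous_parametric_intervalIntegral_of_continuous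
        (f := fun (p : ℝ × ℝ) (u : ℝ) =>
          iterInt X k p.1 u (fun j => i j.castSucc) * deriv X u (i (Fin.last k)))
        (by exact hGu) continuous_snd
    have c2 : Continuous fun p : ℝ × ℝ => ∫ u in (0:ℝ)..p.1,
        iterInt X k p.1 u (fun j => i j.castSucc) * deriv X u (i (Fin.last k)) :=
      intervalIntegral.continuous_parametric_intervalIntegral_of_continuous
        (f := fun (p : ℝ × ℝ) (u : ℝ) =>
          iterInt X k p.1 u (fun j => i j.castSucc) * deriv X u (i (Fin.last k)))
        (by exact hGu) continuous_fst
    apply (c1.sub c2).congr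
    intro p
    show (∫ u in (0:ℝ)..p.2, _) - (∫ u in (0:ℝ)..p.1, _) = iterInt X (k+1) p.1 p.2 i
    rw [intervalIntegral.integral_interval_sub_left (h2 p.1 0 p.2) (h2 p.1 0 p.1)]
    rfl

lemma cont_consT {k : ℕ} {α : Type*} [TopologicalSpace α] {a : α → EuclideanSpace ℝ (Fin d)}
    {w : α → Tpow d k} (ha : Continuous a) (hw : Continuous w) :
    Continuous fun x => consT (a x) (w x) :=
  cont_eucl fun i => ((EuclideanSpace.proj (i 0)).continuous.comp ha).mul
    ((EuclideanSpace.proj (fun j : Fin k => i j.succ)).continuous.comp hw)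

lemma cont_iterInt_left (hX' : Continuous (deriv X)) (k : ℕ) (t : ℝ) :
    Continuous fun u => iterInt X k u t :=
  cont_eucl fun i => (continuous_iterInt hX' k i).comp (continuous_id.prodMk continuous_const)

lemma iterInt_back (hX' : Continuous (deriv X)) (k : ℕ) :
    ∀ {s t : ℝ}, s ≤ t → ∀ (i : Fin (k+1) → Fin d),
    iterInt X (k+1) s t i
      = ∫ u in s..t, deriv X u (i 0) * iterInt X k u t (fun j => i j.succ) := by
  induction k with
  | zero =>
    intro s t hst i
    show (∫ u in s..t, iterInt X 0 s u _ * deriv X u (i (Fin.last 0))) = _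
    simp only [iterInt, one_mul, mul_one]
    rfl
  | succ k ih =>
    intro s t hst i
    show (∫ u in s..t, iterInt X (k+1) s u (fun j => i j.castSucc)
        * deriv X u (i (Fin.last (k+1)))) = _
    have key : ∀ u ∈ Set.uIcc s t,
        iterInt X (k+1) s u (fun j => i j.castSucc) * deriv X u (i (Fin.last (k+1)))
          = ∫ r in s..u, (deriv X r (i 0) * iterInt X k r u (fun j => i j.castSucc.succ))
              * deriv X u (i (Fin.last (k+1))) := by
      intro u hu
      rw [Set.uIcc_of_le hst] at hu
      rw [ih hu.1 (fun j => i j.castSucc), intervalIntegral.integral_mul_const]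
      congr 1
    rw [intervalIntegral.integral_congr key]
    have swap := triangle_swap hst
      (fun r u => (deriv X r (i 0) * iterInt X k r u (fun j => i j.castSucc.succ))
        * deriv X u (i (Fin.last (k+1))))
      (Continuous.continuousOn (by
        apply Continuous.mul
        · apply Continuous.mul
          · exact (EuclideanSpace.proj _).continuous.comp (hX'.comp continuous_fst)
          · exact continuous_iterInt hX' k _
        · exact (EuclideanSpace.proj _).continuous.comp (hX'.comp continuous_snd)))
    rw [swap]
    apply intervalIntegral.integral_congr
    intro r hr
    rw [Set.uIcc_of_le hst] at hr
    simp only [mul_assoc]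
    rw [intervalIntegral.integral_const_mul]
    congr 1

lemma iterInt_back' (hX' : Continuous (deriv X)) (k : ℕ) {s t : ℝ} (hst : s ≤ t) :
    iterInt X (k+1) s t = ∫ u in s..t, consT (deriv X u) (iterInt X k u t) := by
  have hcont : Continuous fun u => consT (deriv X u) (iterInt X k u t) :=
    cont_consT hX' (cont_iterInt_left hX' k t)
  ext i
  rw [eucl_integral_apply _ (hcont.intervalIntegrable s t) i, iterInt_back hX' k hst i]
  rfl

end IterInt

section Fcirc

variable {d e : ℕ}
  {f : EuclideanSpace ℝ (Fin e) → (EuclideanSpace ℝ (Fin d) →L[ℝ] EuclideanSpace ℝ (Fin e))}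

/-- The continuous linear map `w ↦ a ⊗ w`. -/
def consTL {d : ℕ} (k : ℕ) (a : EuclideanSpace ℝ (Fin d)) : Tpow d k →L[ℝ] Tpow d (k+1) :=
  LinearMap.toContinuousLinearMap
    { toFun := fun w => consT a w
      map_add' := fun w w' => by
        ext i
        show a (i 0) * (w _ + w' _) = a (i 0) * w _ + a (i 0) * w' _
        ring
      map_smul' := fun c w => by
        ext i
        show a (i 0) * (c * w _) = c * (a (i 0) * w _)
        ring }

def fcZ (d e : ℕ) : EuclideanSpace ℝ (Fin e) →L[ℝ] (Tpow d 0 →L[ℝ] EuclideanSpace ℝ (Fin e)) :=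
  ContinuousLinearMap.smulRightL ℝ (Tpow d 0) (EuclideanSpace ℝ (Fin e))
    (EuclideanSpace.proj (fun i : Fin 0 => i.elim0))

lemma fcirc_zero_eq : fcirc f 0 = fcZ d e := by
  funext y
  ext v
  rfl

lemma contDiff_fcirc (hf : ContDiff ℝ (⊤ : ℕ∞) f) (k : ℕ) : ContDiff ℝ (⊤ : ℕ∞) (fcirc f k) := by
  induction k with
  | zero => rw [fcirc_zero_eq]; exact (fcZ d e).contDiff
  | succ k ih =>
    show ContDiff ℝ (⊤ : ℕ∞) fun y => ∑ j : Fin d,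
      ((fderiv ℝ (fcirc f k) y) (f y (EuclideanSpace.single j 1))).comp (sliceT k j)
    apply ContDiff.sum
    intro j _
    have h1 : ContDiff ℝ (⊤ : ℕ∞) fun y => (fderiv ℝ (fcirc f k) y) (f y (EuclideanSpace.single j 1)) :=
      (ih.fderiv_right (by simp)).clm_apply (hf.clm_apply contDiff_const)
    exact (ContinuousLinearMap.compL ℝ (Tpow d (k+1)) (Tpow d k)
      (EuclideanSpace ℝ (Fin e))).contDiff.comp h1 |>.clm_apply contDiff_const

lemma sliceT_consT (k : ℕ) (j : Fin d) (a : EuclideanSpace ℝ (Fin d)) (w : Tpow d k) :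
    sliceT k j (consT a w) = a j • w := by
  ext v
  show consT a w (Fin.cons j v) = a j * w v
  rfl

lemma fcirc_cons (k : ℕ) (y : EuclideanSpace ℝ (Fin e)) (a : EuclideanSpace ℝ (Fin d))
    (w : Tpow d k) :
    fcirc f (k+1) y (consT a w) = (fderiv ℝ (fcirc f k) y) (f y a) w := by
  show (∑ j : Fin d, ((fderiv ℝ (fcirc f k) y) (f y (EuclideanSpace.single j 1))).comp
      (sliceT k j)) (consT a w) = _
  rw [ContinuousLinearMap.sum_apply]
  have hterm : ∀ j : Fin d, (((fderiv ℝ (fcirc f k) y) (f y (EuclideanSpace.single j 1))).comp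
      (sliceT k j)) (consT a w)
      = a j • ((fderiv ℝ (fcirc f k) y) (f y (EuclideanSpace.single j 1))) w := by
    intro j
    rw [ContinuousLinearMap.comp_apply, sliceT_consT]
    simp only [_root_.map_smul, ContinuousLinearMap.smul_apply]
  rw [Finset.sum_congr rfl (fun j _ => hterm j)]
  have hb : (∑ j : Fin d, a j • EuclideanSpace.single j (1:ℝ)) = a := by
    have := (EuclideanSpace.basisFun (Fin d) ℝ).sum_repr a
    simpa [EuclideanSpace.basisFun_apply, EuclideanSpace.basisFun_repr] using this
  conv_rhs => rw [← hb]
  rw [map_sum (f y), map_sum, ContinuousLinearMap.sum_apply]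
  exact Finset.sum_congr rfl fun j _ => by
    simp only [_root_.map_smul, ContinuousLinearMap.smul_apply]

end Fcirc

section Main

variable {d e : ℕ} {T : ℝ} {X : ℝ → EuclideanSpace ℝ (Fin d)}
  {f : EuclideanSpace ℝ (Fin e) → (EuclideanSpace ℝ (Fin d) →L[ℝ] EuclideanSpace ℝ (Fin e))}
  {Y : ℝ → EuclideanSpace ℝ (Fin e)}

lemma hasDerivAt_fcirc (hf : ContDiff ℝ (⊤ : ℕ∞) f)
    (hY : ∀ u ∈ Set.Icc (0 : ℝ) T, HasDerivAt Y (f (Y u) (deriv X u)) u)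
    (k : ℕ) (w : Tpow d k) {r : ℝ} (hr : r ∈ Set.Icc (0 : ℝ) T) :
    HasDerivAt (fun r => fcirc f k (Y r) w) (fcirc f (k+1) (Y r) (consT (deriv X r) w)) r := by
  have h1 : HasFDerivAt (fcirc f k) (fderiv ℝ (fcirc f k) (Y r)) (Y r) :=
    ((contDiff_fcirc hf k).differentiable (by simp) (Y r)).hasFDerivAt
  have h2 := h1.comp_hasDerivAt r (hY r hr)
  have h3 := ((ContinuousLinearMap.apply ℝ (EuclideanSpace ℝ (Fin e)) w).hasFDerivAt
    (x := fcirc f k (Y r))).comp_hasDerivAt r h2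
  rw [fcirc_cons]
  exact h3

lemma ftc_step (hX' : Continuous (deriv X)) (hf : ContDiff ℝ (⊤ : ℕ∞) f)
    (hY : ∀ u ∈ Set.Icc (0 : ℝ) T, HasDerivAt Y (f (Y u) (deriv X u)) u)
    (hYc : ContinuousOn Y (Set.Icc (0 : ℝ) T))
    (k : ℕ) (w : Tpow d k) {s u : ℝ} (hs : 0 ≤ s) (hsu : s ≤ u) (huT : u ≤ T) :
    fcirc f k (Y u) w - fcirc f k (Y s) w
      = ∫ r in s..u, fcirc f (k+1) (Y r) (consT (deriv X r) w) := by
  have hIcc : Set.uIcc s u = Set.Icc s u := Set.uIcc_of_le hsu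
  have hsub : Set.Icc s u ⊆ Set.Icc (0:ℝ) T := Set.Icc_subset_Icc hs huT
  have hcont : ContinuousOn (fun r => fcirc f (k+1) (Y r) (consT (deriv X r) w))
      (Set.Icc s u) :=
    ((contDiff_fcirc hf (k+1)).continuous.comp_continuousOn (hYc.mono hsub)).clm_apply
      (cont_consT hX' continuous_const).continuousOn
  refine Eq.symm (intervalIntegral.integral_eq_sub_of_hasDerivAt
    (f := fun r => fcirc f k (Y r) w)
    (f' := fun r => fcirc f (k+1) (Y r) (consT (deriv X r) w)) ?_ ?_)
  · intro r hr
    exact hasDerivAt_fcirc hf hY k w (hsub (hIcc ▸ hr))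
  · apply ContinuousOn.intervalIntegrable
    rw [hIcc]
    exact hcont

end Main

/-- For a C¹ path `X`, a smooth vector field `f`, and a solution `Y` of the
controlled differential equation `dY = f(Y) dX`, `Y₀ = y₀`, the Taylor remainder of order
`N = n+1 ≥ 1` satisfies
`Y_t − Y_s − Σ_{k=1}^{N} f^{∘k}(Y_s)(X^k_{s,t})
  = ∫_{s<s₁<⋯<s_N<t} (f^{∘N}(Y_{s₁}) − f^{∘N}(Y_s))(X'(s₁) ⊗ ⋯ ⊗ X'(s_N)) ds₁⋯ds_N`,
the right-hand simplex integral being written (via Fubini) as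
`∫_s^t (f^{∘N}(Y_u) − f^{∘N}(Y_s))(X'(u) ⊗ X^{N-1}_{u,t}) du`. -/
theorem rough_taylor_remainder_identity {d e : ℕ} (T : ℝ)
    (X : ℝ → EuclideanSpace ℝ (Fin d)) (hX : ContDiff ℝ 1 X)
    (f : EuclideanSpace ℝ (Fin e) → (EuclideanSpace ℝ (Fin d) →L[ℝ] EuclideanSpace ℝ (Fin e)))
    (hf : ContDiff ℝ (⊤ : ℕ∞) f)
    (Y : ℝ → EuclideanSpace ℝ (Fin e)) (y₀ : EuclideanSpace ℝ (Fin e))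
    (hY0 : Y 0 = y₀)
    (hY : ∀ u ∈ Set.Icc (0 : ℝ) T, HasDerivAt Y (f (Y u) (deriv X u)) u)
    (n : ℕ) (s t : ℝ) (hs : 0 ≤ s) (hst : s ≤ t) (htT : t ≤ T) :
    Y t - Y s - ∑ k ∈ Finset.Icc 1 (n + 1), fcirc f k (Y s) (iterInt X k s t)
      = ∫ u in s..t,
          (fcirc f (n + 1) (Y u) - fcirc f (n + 1) (Y s))
            (consT (deriv X u) (iterInt X n u t))  := by
  have hX' : Continuous (deriv X) := hX.continuous_deriv le_rfl
  have hYc : ContinuousOn Y (Set.Icc (0:ℝ) T) := fun u hu =>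
    ((hY u hu).continuousAt).continuousWithinAt
  induction n with
  | zero =>
    rw [show Finset.Icc 1 1 = {1} from Finset.Icc_self 1, Finset.sum_singleton]
    have hback : fcirc f 1 (Y s) (iterInt X 1 s t)
        = ∫ u in s..t, fcirc f 1 (Y s) (consT (deriv X u) (iterInt X 0 u t)) := by
      rw [iterInt_back' hX' 0 hst]
      exact (ContinuousLinearMap.intervalIntegral_comp_comm _
        ((cont_consT hX' (cont_iterInt_left hX' 0 t)).intervalIntegrable s t)).symm
    have hY' : Y t - Y s
        = ∫ u in s..t, fcirc f 1 (Y u) (consT (deriv X u) (iterInt X 0 u t)) := by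
      have h := ftc_step hX' hf hY hYc 0 (iterInt X 0 0 t) hs hst htT
      have h0 : ∀ y : EuclideanSpace ℝ (Fin e), fcirc f 0 y (iterInt X 0 0 t) = y := fun y =>
        one_smul ℝ y
      rw [h0, h0] at h
      exact h
    rw [hY', hback, ← intervalIntegral.integral_sub]
    · exact intervalIntegral.integral_congr fun u _ =>
        (ContinuousLinearMap.sub_apply _ _ _).symm
    · apply ContinuousOn.intervalIntegrable
      rw [Set.uIcc_of_le hst]
      exact ((contDiff_fcirc hf 1).continuous.comp_continuousOn
          (hYc.mono (Set.Icc_subset_Icc hs htT))).clm_apply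
        (cont_consT hX' (cont_iterInt_left hX' 0 t)).continuousOn
    · exact ((fcirc f 1 (Y s)).continuous.comp
        (cont_consT hX' (cont_iterInt_left hX' 0 t))).intervalIntegrable s t
  | succ n ih =>
    rw [Finset.sum_Icc_succ_top (by omega : (1:ℕ) ≤ n + 1 + 1), sub_add_eq_sub_sub, ih]
    have stepA : ∀ u ∈ Set.uIcc s t,
        (fcirc f (n+1) (Y u) - fcirc f (n+1) (Y s)) (consT (deriv X u) (iterInt X n u t))
          = ∫ r in s..u, fcirc f (n+2) (Y r)
              (consT (deriv X r) (consT (deriv X u) (iterInt X n u t))) := by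
      intro u hu
      rw [Set.uIcc_of_le hst] at hu
      rw [ContinuousLinearMap.sub_apply]
      exact ftc_step hX' hf hY hYc (n+1) _ hs hu.1 (hu.2.trans htT)
    rw [intervalIntegral.integral_congr stepA]
    have hg : ContinuousOn (fun p : ℝ × ℝ => fcirc f (n+2) (Y p.1)
        (consT (deriv X p.1) (consT (deriv X p.2) (iterInt X n p.2 t))))
        (Set.Icc s t ×ˢ Set.Icc s t) := by
      apply ContinuousOn.clm_apply
      · apply ((contDiff_fcirc hf (n+2)).continuous.comp_continuousOn)
        apply ContinuousOn.comp (hYc.mono (Set.Icc_subset_Icc hs htT)) continuousOn_fst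
        intro p hp
        exact hp.1
      · exact (cont_consT (hX'.comp continuous_fst)
          ((cont_consT hX' (cont_iterInt_left hX' n t)).comp continuous_snd)).continuousOn
    rw [triangle_swap hst _ hg]
    have stepC : ∀ r ∈ Set.uIcc s t,
        (∫ u in r..t, fcirc f (n+2) (Y r)
            (consT (deriv X r) (consT (deriv X u) (iterInt X n u t))))
          = fcirc f (n+2) (Y r) (consT (deriv X r) (iterInt X (n+1) r t)) := by
      intro r hr
      rw [Set.uIcc_of_le hst] at hr
      have hL := ContinuousLinearMap.intervalIntegral_comp_comm (μ := MeasureTheory.volume)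
        ((fcirc f (n+2) (Y r)).comp (consTL (n+1) (deriv X r)))
        ((cont_consT hX' (cont_iterInt_left hX' n t)).intervalIntegrable r t)
      show (∫ u in r..t, ((fcirc f (n+2) (Y r)).comp (consTL (n+1) (deriv X r)))
          (consT (deriv X u) (iterInt X n u t))) = _
      rw [hL, ← iterInt_back' hX' n hr.2]
      rfl
    rw [intervalIntegral.integral_congr stepC]
    have stepD : fcirc f (n+2) (Y s) (iterInt X (n+2) s t)
        = ∫ r in s..t, fcirc f (n+2) (Y s) (consT (deriv X r) (iterInt X (n+1) r t)) := by
      rw [iterInt_back' hX' (n+1) hst]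
      exact (ContinuousLinearMap.intervalIntegral_comp_comm _
        ((cont_consT hX' (cont_iterInt_left hX' (n+1) t)).intervalIntegrable s t)).symm
    rw [stepD, ← intervalIntegral.integral_sub]
    · exact intervalIntegral.integral_congr fun r _ =>
        (ContinuousLinearMap.sub_apply _ _ _).symm
    · apply ContinuousOn.intervalIntegrable
      rw [Set.uIcc_of_le hst]
      exact ((contDiff_fcirc hf (n+2)).continuous.comp_continuousOn
          (hYc.mono (Set.Icc_subset_Icc hs htT))).clm_apply
        (cont_consT hX' (cont_iterInt_left hX' (n+1) t)).continuousOn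
    · exact ((fcirc f (n+2) (Y s)).continuous.comp
        (cont_consT hX' (cont_iterInt_left hX' (n+1) t))).intervalIntegrable s t

end
end

section
/- Let ω be a nonnegative superadditive function on {(s,t) : 0 ≤ s ≤ t ≤ T}, and let s = t_0 < t_1 < ⋯ < t_n = t be a partition with n ≥ 2. Then Σ_{j=1}^{n−1} ω(t_{j−1}, t_{j+1}) ≤ 2 ω(s,t), and consequently there exists j with 1 ≤ j ≤ n−1 such that ω(t_{j−1}, t_{j+1}) ≤ (2/(n−1)) ω(s,t). -/
lemma stepMono {u : ℕ → ℝ} {m : ℕ} (h : ∀ k, k < m → u k ≤ u (k+1)) :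
    ∀ i j, i ≤ j → j ≤ m → u i ≤ u j := by
  intro i j hij hjm
  induction j with
  | zero => obtain rfl := Nat.le_zero.mp hij; exact le_rfl
  | succ j ih =>
    rcases Nat.eq_or_lt_of_le hij with rfl | hlt
    · exact le_refl _
    · exact le_trans (ih (Nat.lt_succ_iff.mp hlt) (by omega)) (h j (by omega))

/-- For a nonnegative superadditive function `ω` on
`{(s,t) : 0 ≤ s ≤ t ≤ T}` and a partition `s = t₀ < t₁ < ⋯ < t_n = t` with `n ≥ 2`:
`Σ_{j=1}^{n−1} ω(t_{j−1}, t_{j+1}) ≤ 2 ω(s,t)`, and consequently there is `1 ≤ j ≤ n−1`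
with `ω(t_{j−1}, t_{j+1}) ≤ (2/(n−1)) ω(s,t)`. -/
theorem superadditive_doubling_and_point_choice (T : ℝ) (ω : ℝ → ℝ → ℝ)
    (hnonneg : ∀ a b : ℝ, 0 ≤ a → a ≤ b → b ≤ T → 0 ≤ ω a b)
    (hsuper : ∀ a b c : ℝ, 0 ≤ a → a ≤ b → b ≤ c → c ≤ T → ω a b + ω b c ≤ ω a c)
    (s t : ℝ) (hs : 0 ≤ s) (htT : t ≤ T)
    (n : ℕ) (hn : 2 ≤ n) (τ : ℕ → ℝ)
    (hτ0 : τ 0 = s) (hτn : τ n = t) (hmono : ∀ i, i < n → τ i < τ (i + 1)) :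
    (∑ j ∈ Finset.Icc 1 (n - 1), ω (τ (j - 1)) (τ (j + 1))) ≤ 2 * ω s t ∧
      ∃ j, 1 ≤ j ∧ j ≤ n - 1 ∧
        ω (τ (j - 1)) (τ (j + 1)) ≤ (2 / ((n : ℝ) - 1)) * ω s t := by
  have hτle : ∀ i j, i ≤ j → j ≤ n → τ i ≤ τ j :=
    stepMono (fun k hk => (hmono k hk).le)
  have hτs : ∀ i, i ≤ n → s ≤ τ i := fun i hi => hτ0 ▸ hτle 0 i (Nat.zero_le _) hi
  have hτt : ∀ i, i ≤ n → τ i ≤ t := fun i hi => hτn ▸ hτle i n hi le_rfl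
  have hst : s ≤ t := hτ0 ▸ hτt 0 (by omega)
  have hτ0' : ∀ i, i ≤ n → 0 ≤ τ i := fun i hi => le_trans hs (hτs i hi)
  have hτT : ∀ i, i ≤ n → τ i ≤ T := fun i hi => le_trans (hτt i hi) htT
  -- between lemma
  have between : ∀ i j, i ≤ j → j ≤ n → ω (τ i) (τ j) ≤ ω s t := by
    intro i j hij hjn
    have h1 : ω s (τ i) + ω (τ i) (τ j) ≤ ω s (τ j) :=
      hsuper s (τ i) (τ j) hs (hτs i (by omega)) (hτle i j hij hjn) (hτT j hjn)
    have h2 : ω s (τ j) + ω (τ j) t ≤ ω s t :=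
      hsuper s (τ j) t hs (hτs j hjn) (hτt j hjn) htT
    have h3 : 0 ≤ ω s (τ i) := hnonneg s (τ i) hs (hτs i (by omega)) (hτT i (by omega))
    have h4 : 0 ≤ ω (τ j) t := hnonneg (τ j) t (hτ0' j hjn) (hτt j hjn) htT
    linarith
  -- chain lemma
  have chain : ∀ (m : ℕ) (u : ℕ → ℝ), (∀ k, k ≤ m → 0 ≤ u k) → (∀ k, k ≤ m → u k ≤ T) →
      (∀ k, k < m → u k ≤ u (k+1)) →
      ∑ k ∈ Finset.range m, ω (u k) (u (k+1)) ≤ ω (u 0) (u m) := by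
    intro m
    induction m with
    | zero => intro u h0 hT _; simpa using hnonneg (u 0) (u 0) (h0 0 le_rfl) le_rfl (hT 0 le_rfl)
    | succ m ih =>
      intro u h0 hT hstep
      rw [Finset.sum_range_succ]
      have hmono' : ∀ i j, i ≤ j → j ≤ m + 1 → u i ≤ u j := stepMono hstep
      calc ∑ k ∈ Finset.range m, ω (u k) (u (k+1)) + ω (u m) (u (m+1))
          ≤ ω (u 0) (u m) + ω (u m) (u (m+1)) := by
            have := ih u (fun k hk => h0 k (by omega)) (fun k hk => hT k (by omega))
              (fun k hk => hstep k (by omega))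
            linarith
        _ ≤ ω (u 0) (u (m+1)) :=
            hsuper (u 0) (u m) (u (m+1)) (h0 0 (by omega))
              (hmono' 0 m (by omega) (by omega)) (hmono' m (m+1) (by omega) le_rfl)
              (hT (m+1) le_rfl)
  -- reindex the sum
  have hre : (∑ j ∈ Finset.Icc 1 (n - 1), ω (τ (j - 1)) (τ (j + 1)))
      = ∑ k ∈ Finset.range (n - 1), ω (τ k) (τ (k + 2)) := by
    have himg : Finset.Icc 1 (n - 1) = (Finset.range (n-1)).image (fun k => k + 1) := by
      ext j
      simp only [Finset.mem_Icc, Finset.mem_image, Finset.mem_range]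
      constructor
      · rintro ⟨h1, h2⟩; exact ⟨j - 1, by omega, by omega⟩
      · rintro ⟨a, ha, rfl⟩; omega
    rw [himg, Finset.sum_image (by intro a _ b _ h; simp only at h; omega)]
    apply Finset.sum_congr rfl
    intro k _; congr 2 <;> omega
  -- parity split
  have hsplit : ∑ k ∈ Finset.range (n - 1), ω (τ k) (τ (k + 2)) =
      (∑ k ∈ (Finset.range (n-1)).filter (fun k => Even k), ω (τ k) (τ (k + 2))) +
      (∑ k ∈ (Finset.range (n-1)).filter (fun k => ¬ Even k), ω (τ k) (τ (k + 2))) :=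
    (Finset.sum_filter_add_sum_filter_not _ _ _).symm
  -- even part
  have heven_set : (Finset.range (n-1)).filter (fun k => Even k)
      = (Finset.range (n / 2)).image (fun a => 2 * a) := by
    ext k
    simp only [Finset.mem_filter, Finset.mem_range, Finset.mem_image, Nat.even_iff]
    constructor
    · rintro ⟨hk, hk2⟩; exact ⟨k / 2, by omega, by omega⟩
    · rintro ⟨a, ha, rfl⟩; omega
  have heven : (∑ k ∈ (Finset.range (n-1)).filter (fun k => Even k), ω (τ k) (τ (k + 2)))
      ≤ ω s t := by
    rw [heven_set, Finset.sum_image (by intro a _ b _ h; simp only at h; omega)]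
    have := chain (n / 2) (fun a => τ (2 * a))
      (fun k hk => hτ0' (2*k) (by omega)) (fun k hk => hτT (2*k) (by omega))
      (fun k hk => hτle (2*k) (2*(k+1)) (by omega) (by omega))
    calc ∑ a ∈ Finset.range (n / 2), ω (τ (2 * a)) (τ (2 * a + 2))
        = ∑ a ∈ Finset.range (n / 2), ω (τ (2 * a)) (τ (2 * (a+1))) := by
          apply Finset.sum_congr rfl; intro a _; congr 2
      _ ≤ ω (τ (2 * 0)) (τ (2 * (n / 2))) := this
      _ ≤ ω s t := between (2*0) (2*(n/2)) (by omega) (by omega)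
  -- odd part
  have hodd_set : (Finset.range (n-1)).filter (fun k => ¬ Even k)
      = (Finset.range ((n-1) / 2)).image (fun a => 2 * a + 1) := by
    ext k
    simp only [Finset.mem_filter, Finset.mem_range, Finset.mem_image, Nat.even_iff]
    constructor
    · rintro ⟨hk, hk2⟩; exact ⟨k / 2, by omega, by omega⟩
    · rintro ⟨a, ha, rfl⟩; omega
  have hodd : (∑ k ∈ (Finset.range (n-1)).filter (fun k => ¬ Even k), ω (τ k) (τ (k + 2)))
      ≤ ω s t := by
    rw [hodd_set, Finset.sum_image (by intro a _ b _ h; simp only at h; omega)]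
    have := chain ((n-1) / 2) (fun a => τ (2 * a + 1))
      (fun k hk => hτ0' (2*k+1) (by omega)) (fun k hk => hτT (2*k+1) (by omega))
      (fun k hk => hτle (2*k+1) (2*(k+1)+1) (by omega) (by omega))
    calc ∑ a ∈ Finset.range ((n-1) / 2), ω (τ (2 * a + 1)) (τ (2 * a + 1 + 2))
        = ∑ a ∈ Finset.range ((n-1) / 2), ω (τ (2 * a + 1)) (τ (2 * (a+1) + 1)) := by
          apply Finset.sum_congr rfl; intro a _; congr 2
      _ ≤ ω (τ (2 * 0 + 1)) (τ (2 * ((n-1) / 2) + 1)) := this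
      _ ≤ ω s t := between (2*0+1) (2*((n-1)/2)+1) (by omega) (by omega)
  have hmain : (∑ j ∈ Finset.Icc 1 (n - 1), ω (τ (j - 1)) (τ (j + 1))) ≤ 2 * ω s t := by
    rw [hre, hsplit]; linarith
  refine ⟨hmain, ?_⟩
  -- averaging
  have hcard : (Finset.Icc 1 (n - 1)).card = n - 1 := by
    rw [Nat.card_Icc]; omega
  have hne : (Finset.Icc 1 (n - 1)).Nonempty := by
    rw [Finset.nonempty_Icc]; omega
  have hn1 : (0:ℝ) < (n:ℝ) - 1 := by
    have : (2:ℝ) ≤ (n:ℝ) := by exact_mod_cast hn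
    linarith
  have hsum_const : ∑ _j ∈ Finset.Icc 1 (n - 1), (2 / ((n : ℝ) - 1)) * ω s t
      = 2 * ω s t := by
    rw [Finset.sum_const, hcard, nsmul_eq_mul]
    have hcast : ((n - 1 : ℕ) : ℝ) = (n:ℝ) - 1 := by
      have := Nat.cast_sub (by omega : 1 ≤ n) (R := ℝ); simpa using this
    rw [hcast]
    field_simp
  obtain ⟨j, hj, hjle⟩ := Finset.exists_le_of_sum_le
    (f := fun j => ω (τ (j - 1)) (τ (j + 1)))
    (g := fun _ => (2 / ((n : ℝ) - 1)) * ω s t) hne (le_trans hmain hsum_const.ge)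
  rw [Finset.mem_Icc] at hj
  exact ⟨j, hj.1, hj.2, hjle⟩
end

section
/- (Abstract point-removal estimate.) Let E be a normed real vector space, let ω be a nonnegative superadditive function on {(s,t) : 0 ≤ s ≤ t ≤ T}, let θ > 1 and C ≥ 0. Fix 0 ≤ s ≤ t ≤ T and suppose Γ assigns to every finite partition P = {s = t_0 < t_1 < ⋯ < t_n = t} an element Γ(P) ∈ E such that Γ({s,t}) = 0 and, for every partition P with n ≥ 2 and every interior point t_j (1 ≤ j ≤ n−1), ‖Γ(P) − Γ(P∖{t_j})‖ ≤ C · ω(t_{j−1}, t_{j+1})^θ. Then for every partition P of [s,t], ‖Γ(P)‖ ≤ C · (Σ_{r=2}^{∞} min(2/(r−1), 1)^θ) · ω(s,t)^θ. -/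
private lemma omega_sub (T : ℝ) (ω : ℝ → ℝ → ℝ)
    (hnonneg : ∀ a b : ℝ, 0 ≤ a → a ≤ b → b ≤ T → 0 ≤ ω a b)
    (hsuper : ∀ a b c : ℝ, 0 ≤ a → a ≤ b → b ≤ c → c ≤ T → ω a b + ω b c ≤ ω a c)
    {s a b t : ℝ} (hs : 0 ≤ s) (hsa : s ≤ a) (hab : a ≤ b) (hbt : b ≤ t) (htT : t ≤ T) :
    ω a b ≤ ω s t := by
  have h1 := hsuper s a b hs hsa hab (hbt.trans htT)
  have h2 := hsuper s b t hs (hsa.trans hab) hbt htT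
  have n1 := hnonneg s a hs hsa ((hab.trans hbt).trans htT)
  have n2 := hnonneg b t (hs.trans (hsa.trans hab)) hbt htT
  linarith

private lemma omega_chain (T : ℝ) (ω : ℝ → ℝ → ℝ)
    (hnonneg : ∀ a b : ℝ, 0 ≤ a → a ≤ b → b ≤ T → 0 ≤ ω a b)
    (hsuper : ∀ a b c : ℝ, 0 ≤ a → a ≤ b → b ≤ c → c ≤ T → ω a b + ω b c ≤ ω a c)
    (g : ℕ → ℝ) (hg : Monotone g) (h0 : 0 ≤ g 0) (hT : ∀ i, g i ≤ T) (n : ℕ) :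
    ∑ i ∈ Finset.range n, ω (g i) (g (i + 1)) ≤ ω (g 0) (g n) := by
  induction n with
  | zero => simpa using hnonneg (g 0) (g 0) h0 le_rfl (hT 0)
  | succ n ih =>
    rw [Finset.sum_range_succ]
    have := hsuper (g 0) (g n) (g (n + 1)) h0 (hg (Nat.zero_le n)) (hg (Nat.le_succ n))
      (hT (n + 1))
    linarith

private lemma aux_point_removal {E : Type*} [NormedAddCommGroup E] [NormedSpace ℝ E]
    (T : ℝ) (ω : ℝ → ℝ → ℝ)
    (hnonneg : ∀ a b : ℝ, 0 ≤ a → a ≤ b → b ≤ T → 0 ≤ ω a b)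
    (hsuper : ∀ a b c : ℝ, 0 ≤ a → a ≤ b → b ≤ c → c ≤ T → ω a b + ω b c ≤ ω a c)
    (θ C : ℝ) (hθ : 1 < θ) (hC : 0 ≤ C)
    (s t : ℝ) (hs : 0 ≤ s) (hst : s ≤ t) (htT : t ≤ T)
    (Γ : Finset ℝ → E)
    (hbase : Γ ({s, t} : Finset ℝ) = 0)
    (hremove : ∀ P : Finset ℝ, s ∈ P → t ∈ P → (∀ y ∈ P, s ≤ y ∧ y ≤ t) →
      ∀ x ∈ P, x ≠ s → x ≠ t → ∀ a ∈ P, ∀ b ∈ P, a < x → x < b →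
        (∀ y ∈ P, ¬(a < y ∧ y < x)) → (∀ y ∈ P, ¬(x < y ∧ y < b)) →
        ‖Γ P - Γ (P.erase x)‖ ≤ C * ω a b ^ θ) :
    ∀ (k : ℕ) (P : Finset ℝ), P.card = k → s ∈ P → t ∈ P → (∀ y ∈ P, s ≤ y ∧ y ≤ t) →
      ‖Γ P‖ ≤ C * (∑ m ∈ Finset.range (k - 2), (min (2 / ((m : ℝ) + 1)) 1) ^ θ)
        * ω s t ^ θ := by
  have hω : 0 ≤ ω s t := hnonneg s t hs hst htT
  have hW : 0 ≤ ω s t ^ θ := Real.rpow_nonneg hω θ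
  have hterm : ∀ m : ℕ, 0 ≤ (min (2 / ((m : ℝ) + 1)) 1) ^ θ := fun m =>
    Real.rpow_nonneg (le_min (by positivity) zero_le_one) θ
  have hRHS : ∀ n : ℕ,
      0 ≤ C * (∑ m ∈ Finset.range n, (min (2 / ((m : ℝ) + 1)) 1) ^ θ) * ω s t ^ θ := by
    intro n
    have := Finset.sum_nonneg (fun m (_ : m ∈ Finset.range n) => hterm m)
    positivity
  rcases eq_or_lt_of_le hst with heq | hlt
  · -- degenerate case s = t
    subst heq
    intro k P hk hsP htP hP
    have hPs : P = {s} := Finset.eq_singleton_iff_unique_mem.mpr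
      ⟨hsP, fun y hy => le_antisymm (hP y hy).2 (hP y hy).1⟩
    have : ({s, s} : Finset ℝ) = {s} := by simp
    rw [hPs, ← this, hbase, norm_zero]
    exact hRHS _
  intro k
  induction k with
  | zero =>
    intro P hk hsP _ _
    rw [Finset.card_eq_zero] at hk
    simp [hk] at hsP
  | succ k ih =>
    intro P hk hsP htP hP
    by_cases hk2 : k + 1 ≤ 2
    · -- base case: P = {s, t}
      have hsub : ({s, t} : Finset ℝ) ⊆ P := by
        intro y hy
        simp only [Finset.mem_insert, Finset.mem_singleton] at hy
        rcases hy with rfl | rfl <;> assumption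
      have hcard2 : ({s, t} : Finset ℝ).card = 2 := by
        rw [Finset.card_insert_of_notMem (by simp [hlt.ne]), Finset.card_singleton]
      have : ({s, t} : Finset ℝ) = P :=
        Finset.eq_of_subset_of_card_le hsub (by omega)
      rw [← this, hbase, norm_zero]
      exact hRHS _
    · -- main case: k + 1 ≥ 3, so k ≥ 2
      have hk2' : 2 ≤ k := by omega
      have hlt' : ∀ i : ℕ, min i k < k + 1 := fun i =>
        Nat.lt_succ_of_le (min_le_right i k)
      set g : ℕ → ℝ := fun i => P.orderEmbOfFin hk ⟨min i k, hlt' i⟩ with hgdef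
      have gmem : ∀ i, g i ∈ P := fun i => P.orderEmbOfFin_mem hk _
      have gmono : Monotone g := by
        intro i j hij
        simp only [hgdef]
        exact (P.orderEmbOfFin hk).monotone (by rw [Fin.mk_le_mk]; omega)
      have gstrict : ∀ i j : ℕ, i ≤ k → j ≤ k → (g i < g j ↔ i < j) := by
        intro i j hi hj
        simp only [hgdef]
        rw [OrderEmbedding.lt_iff_lt, Fin.mk_lt_mk, Nat.min_eq_left hi, Nat.min_eq_left hj]
      have g0 : g 0 = s := by
        have hmin : P.min' ⟨s, hsP⟩ = s :=
          le_antisymm (Finset.min'_le P s hsP)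
            (Finset.le_min' _ _ _ fun y hy => (hP y hy).1)
        have h0 := Finset.orderEmbOfFin_zero hk (Nat.succ_pos k)
        simp only [hgdef]
        have he : (⟨min 0 k, hlt' 0⟩ : Fin (k + 1)) = ⟨0, Nat.succ_pos k⟩ := Fin.ext (by simp)
        rw [he, h0, hmin]
      have gk : g k = t := by
        have hmax : P.max' ⟨s, hsP⟩ = t :=
          le_antisymm (Finset.max'_le _ _ _ fun y hy => (hP y hy).2)
            (Finset.le_max' P t htP)
        have h0 := Finset.orderEmbOfFin_last hk (Nat.succ_pos k)
        simp only [hgdef]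
        have he : (⟨min k k, hlt' k⟩ : Fin (k + 1)) =
            ⟨k + 1 - 1, Nat.sub_lt (Nat.succ_pos k) (Nat.succ_pos 0)⟩ := Fin.ext (by simp)
        rw [he, h0, hmax]
      have gsurj : ∀ y ∈ P, ∃ j, j ≤ k ∧ y = g j := by
        intro y hy
        have hy' : y ∈ Set.range (P.orderEmbOfFin hk) := by
          rw [Finset.range_orderEmbOfFin]; exact hy
        obtain ⟨i, hi⟩ := hy'
        refine ⟨i.1, Nat.lt_succ_iff.mp i.2, ?_⟩
        simp only [hgdef]
        rw [← hi]
        congr 1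
        exact Fin.ext (by simp [Nat.min_eq_left (Nat.lt_succ_iff.mp i.2)])
      have gge : ∀ i, s ≤ g i := fun i => (hP _ (gmem i)).1
      have gle : ∀ i, g i ≤ t := fun i => (hP _ (gmem i)).2
      have gT : ∀ i, g i ≤ T := fun i => (gle i).trans htT
      have g0n : 0 ≤ g 0 := hs.trans (gge 0)
      -- number of interior points
      have hc1 : 1 ≤ k - 1 := by omega
      set c : ℕ := k - 1 with hcdef
      -- the two chains
      have chain1 : ∑ j ∈ Finset.range c, ω (g (2 * j)) (g (2 * (j + 1))) ≤ ω s t := by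
        have h := omega_chain T ω hnonneg hsuper (fun j => g (2 * j))
          (gmono.comp (fun i j hij => by omega)) g0n (fun i => gT _) c
        refine h.trans ?_
        have : g (2 * 0) = s := by rw [mul_zero, g0]
        rw [this]
        exact omega_sub T ω hnonneg hsuper hs le_rfl (gge _) (gle _) htT
      have chain2 : ∑ j ∈ Finset.range c, ω (g (2 * j + 1)) (g (2 * (j + 1) + 1)) ≤ ω s t := by
        have h := omega_chain T ω hnonneg hsuper (fun j => g (2 * j + 1))
          (gmono.comp (fun i j hij => by omega)) (hs.trans (gge _)) (fun i => gT _) c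
        refine h.trans ?_
        exact omega_sub T ω hnonneg hsuper hs (gge _) (gmono (by omega)) (gle _) htT
      -- splitting the sum of interior windows
      set F : ℕ → ℝ := fun i => ω (g (i - 1)) (g (i + 1)) with hFdef
      have hFnonneg : ∀ i, 0 ≤ F i := fun i =>
        hnonneg _ _ (hs.trans (gge _)) (gmono (by omega)) (gT _)
      have hsplit : ∑ i ∈ Finset.Icc 1 c, F i ≤ 2 * ω s t := by
        rw [← Finset.sum_filter_add_sum_filter_not (Finset.Icc 1 c) (fun i => i % 2 = 1) F]
        have podd : ∑ i ∈ (Finset.Icc 1 c).filter (fun i => i % 2 = 1), F i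
            ≤ ∑ j ∈ Finset.range c, ω (g (2 * j)) (g (2 * (j + 1))) := by
          have hcongr : ∑ i ∈ (Finset.Icc 1 c).filter (fun i => i % 2 = 1), F i
              = ∑ i ∈ (Finset.Icc 1 c).filter (fun i => i % 2 = 1),
                  ω (g (2 * (i / 2))) (g (2 * (i / 2 + 1))) := by
            refine Finset.sum_congr rfl fun i hi => ?_
            simp only [Finset.mem_filter, Finset.mem_Icc] at hi
            simp only [hFdef]
            have e1 : i - 1 = 2 * (i / 2) := by omega
            have e2 : i + 1 = 2 * (i / 2 + 1) := by omega
            rw [e1, e2]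
          rw [hcongr]
          have hinj : ∀ x ∈ (Finset.Icc 1 c).filter (fun i => i % 2 = 1),
              ∀ y ∈ (Finset.Icc 1 c).filter (fun i => i % 2 = 1),
                x / 2 = y / 2 → x = y := by
            intro x hx y hy h
            simp only [Finset.mem_filter, Finset.mem_Icc] at hx hy
            omega
          refine le_trans (le_of_eq (Eq.symm (Finset.sum_image
            (f := fun j => ω (g (2 * j)) (g (2 * (j + 1)))) hinj))) ?_
          refine Finset.sum_le_sum_of_subset_of_nonneg ?_ (fun j _ _ =>
            hnonneg _ _ (hs.trans (gge _)) (gmono (by omega)) (gT _))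
          intro j hj
          simp only [Finset.mem_image, Finset.mem_filter, Finset.mem_Icc] at hj
          obtain ⟨i, ⟨⟨hi1, hi2⟩, hi3⟩, rfl⟩ := hj
          rw [Finset.mem_range]
          omega
        have peven : ∑ i ∈ (Finset.Icc 1 c).filter (fun i => ¬ i % 2 = 1), F i
            ≤ ∑ j ∈ Finset.range c, ω (g (2 * j + 1)) (g (2 * (j + 1) + 1)) := by
          have hcongr : ∑ i ∈ (Finset.Icc 1 c).filter (fun i => ¬ i % 2 = 1), F i
              = ∑ i ∈ (Finset.Icc 1 c).filter (fun i => ¬ i % 2 = 1),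
                  ω (g (2 * (i / 2 - 1) + 1)) (g (2 * (i / 2 - 1 + 1) + 1)) := by
            refine Finset.sum_congr rfl fun i hi => ?_
            simp only [Finset.mem_filter, Finset.mem_Icc] at hi
            simp only [hFdef]
            have e1 : i - 1 = 2 * (i / 2 - 1) + 1 := by omega
            have e2 : i + 1 = 2 * (i / 2 - 1 + 1) + 1 := by omega
            rw [e1, e2]
          rw [hcongr]
          have hinj : ∀ x ∈ (Finset.Icc 1 c).filter (fun i => ¬ i % 2 = 1),
              ∀ y ∈ (Finset.Icc 1 c).filter (fun i => ¬ i % 2 = 1),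
                x / 2 - 1 = y / 2 - 1 → x = y := by
            intro x hx y hy h
            simp only [Finset.mem_filter, Finset.mem_Icc] at hx hy
            omega
          refine le_trans (le_of_eq (Eq.symm (Finset.sum_image
            (f := fun j => ω (g (2 * j + 1)) (g (2 * (j + 1) + 1))) hinj))) ?_
          refine Finset.sum_le_sum_of_subset_of_nonneg ?_ (fun j _ _ =>
            hnonneg _ _ (hs.trans (gge _)) (gmono (by omega)) (gT _))
          intro j hj
          simp only [Finset.mem_image, Finset.mem_filter, Finset.mem_Icc] at hj
          obtain ⟨i, ⟨⟨hi1, hi2⟩, hi3⟩, rfl⟩ := hj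
          rw [Finset.mem_range]
          omega
        linarith
      -- pick the minimizing interior point
      obtain ⟨i₀, hi₀mem, hmin⟩ := Finset.exists_min_image (Finset.Icc 1 c) F
        ⟨1, by rw [Finset.mem_Icc]; omega⟩
      rw [Finset.mem_Icc] at hi₀mem
      obtain ⟨hi₀1, hi₀c⟩ := hi₀mem
      have hcard : (Finset.Icc 1 c).card = c := by rw [Nat.card_Icc]; omega
      have hcmin : (c : ℝ) * F i₀ ≤ ∑ i ∈ Finset.Icc 1 c, F i := by
        have h := Finset.card_nsmul_le_sum (Finset.Icc 1 c) F (F i₀)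
          (fun i hi => hmin i hi)
        rw [hcard, nsmul_eq_mul] at h
        exact h
      have hcpos : (0 : ℝ) < (c : ℝ) := by exact_mod_cast hc1
      have h2c : F i₀ ≤ 2 / (c : ℝ) * ω s t := by
        rw [div_mul_eq_mul_div, le_div_iff₀ hcpos]
        nlinarith
      have h1c : F i₀ ≤ 1 * ω s t := by
        rw [one_mul]
        exact omega_sub T ω hnonneg hsuper hs (gge _) (gmono (by omega)) (gle _) htT
      have hFmin : F i₀ ≤ min (2 / (c : ℝ)) 1 * ω s t := by
        rcases min_cases (2 / (c : ℝ)) 1 with ⟨hm, _⟩ | ⟨hm, _⟩ <;> rw [hm]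
        · exact h2c
        · exact h1c
      -- remove the point x = g i₀
      have hax : g (i₀ - 1) < g i₀ := (gstrict _ _ (by omega) (by omega)).mpr (by omega)
      have hxb : g i₀ < g (i₀ + 1) := (gstrict _ _ (by omega) (by omega)).mpr (by omega)
      have hsx : s < g i₀ := by
        rw [← g0]; exact (gstrict 0 i₀ (by omega) (by omega)).mpr (by omega)
      have hxt : g i₀ < t := by
        rw [← gk]; exact (gstrict i₀ k (by omega) le_rfl).mpr (by omega)
      have gap1 : ∀ y ∈ P, ¬(g (i₀ - 1) < y ∧ y < g i₀) := by
        rintro y hy ⟨h1, h2⟩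
        obtain ⟨j, hj, rfl⟩ := gsurj y hy
        rw [gstrict _ _ (by omega) hj] at h1
        rw [gstrict _ _ hj (by omega)] at h2
        omega
      have gap2 : ∀ y ∈ P, ¬(g i₀ < y ∧ y < g (i₀ + 1)) := by
        rintro y hy ⟨h1, h2⟩
        obtain ⟨j, hj, rfl⟩ := gsurj y hy
        rw [gstrict _ _ (by omega) hj] at h1
        rw [gstrict _ _ hj (by omega)] at h2
        omega
      have hrm := hremove P hsP htP hP (g i₀) (gmem i₀) hsx.ne' hxt.ne
        (g (i₀ - 1)) (gmem _) (g (i₀ + 1)) (gmem _) hax hxb gap1 gap2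
      -- induction hypothesis on the erased set
      have hcard' : (P.erase (g i₀)).card = k := by
        rw [Finset.card_erase_of_mem (gmem i₀), hk]; omega
      have hsP' : s ∈ P.erase (g i₀) := Finset.mem_erase.mpr ⟨hsx.ne, hsP⟩
      have htP' : t ∈ P.erase (g i₀) := Finset.mem_erase.mpr ⟨hxt.ne', htP⟩
      have hP' : ∀ y ∈ P.erase (g i₀), s ≤ y ∧ y ≤ t := fun y hy =>
        hP y (Finset.mem_of_mem_erase hy)
      have ihE := ih (P.erase (g i₀)) hcard' hsP' htP' hP'
      -- bound on the removal step
      have hminn : 0 ≤ min (2 / (c : ℝ)) 1 := le_min (by positivity) zero_le_one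
      have hstep : ‖Γ P - Γ (P.erase (g i₀))‖
          ≤ C * ((min (2 / (c : ℝ)) 1) ^ θ * ω s t ^ θ) := by
        refine hrm.trans ?_
        have h1 : ω (g (i₀ - 1)) (g (i₀ + 1)) ^ θ ≤ (min (2 / (c : ℝ)) 1 * ω s t) ^ θ :=
          Real.rpow_le_rpow (hFnonneg i₀) hFmin (by linarith)
        have h2 : (min (2 / (c : ℝ)) 1 * ω s t) ^ θ
            = (min (2 / (c : ℝ)) 1) ^ θ * ω s t ^ θ := Real.mul_rpow hminn hω
        rw [← h2]
        exact mul_le_mul_of_nonneg_left h1 hC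
      have tri : ‖Γ P‖ ≤ ‖Γ (P.erase (g i₀))‖ + ‖Γ P - Γ (P.erase (g i₀))‖ := by
        have h := norm_add_le (Γ (P.erase (g i₀))) (Γ P - Γ (P.erase (g i₀)))
        simpa using h
      -- assemble
      have hrange : (k + 1) - 2 = (k - 2) + 1 := by omega
      rw [hrange, Finset.sum_range_succ]
      have hcast : ((k - 2 : ℕ) : ℝ) + 1 = ((c : ℕ) : ℝ) := by
        have h' : (k - 2) + 1 = c := by omega
        exact_mod_cast h'
      rw [hcast]
      calc ‖Γ P‖ ≤ (C * (∑ m ∈ Finset.range (k - 2), (min (2 / ((m : ℝ) + 1)) 1) ^ θ)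
            * ω s t ^ θ) + C * ((min (2 / (c : ℝ)) 1) ^ θ * ω s t ^ θ) := by linarith
        _ = C * ((∑ m ∈ Finset.range (k - 2), (min (2 / ((m : ℝ) + 1)) 1) ^ θ)
            + (min (2 / (c : ℝ)) 1) ^ θ) * ω s t ^ θ := by ring

/-- **Abstract point-removal estimate.** Let `E` be a normed real vector space,
`ω` a nonnegative superadditive function on `{(s,t) : 0 ≤ s ≤ t ≤ T}`, `θ > 1`, `C ≥ 0`.
Fix `0 ≤ s ≤ t ≤ T` and let `Γ` assign to each finite partition `P` of `[s,t]` (a finite set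
of reals containing `s` and `t` and contained in `[s,t]`) an element of `E`, with
`Γ({s,t}) = 0` and such that removing any interior point `x` of `P` with neighbours `a < x < b`
in `P` changes `Γ` by at most `C ω(a,b)^θ`. Then every partition `P` of `[s,t]` satisfies
`‖Γ(P)‖ ≤ C (Σ_{r=2}^∞ min(2/(r−1), 1)^θ) ω(s,t)^θ` (the series being indexed by `r = m+2`). -/
theorem abstract_point_removal_estimate {E : Type*} [NormedAddCommGroup E] [NormedSpace ℝ E]
    (T : ℝ) (ω : ℝ → ℝ → ℝ)
    (hnonneg : ∀ a b : ℝ, 0 ≤ a → a ≤ b → b ≤ T → 0 ≤ ω a b)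
    (hsuper : ∀ a b c : ℝ, 0 ≤ a → a ≤ b → b ≤ c → c ≤ T → ω a b + ω b c ≤ ω a c)
    (θ C : ℝ) (hθ : 1 < θ) (hC : 0 ≤ C)
    (s t : ℝ) (hs : 0 ≤ s) (hst : s ≤ t) (htT : t ≤ T)
    (Γ : Finset ℝ → E)
    (hbase : Γ ({s, t} : Finset ℝ) = 0)
    (hremove : ∀ P : Finset ℝ, s ∈ P → t ∈ P → (∀ y ∈ P, s ≤ y ∧ y ≤ t) →
      ∀ x ∈ P, x ≠ s → x ≠ t → ∀ a ∈ P, ∀ b ∈ P, a < x → x < b →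
        (∀ y ∈ P, ¬(a < y ∧ y < x)) → (∀ y ∈ P, ¬(x < y ∧ y < b)) →
        ‖Γ P - Γ (P.erase x)‖ ≤ C * ω a b ^ θ)
    (P : Finset ℝ) (hsP : s ∈ P) (htP : t ∈ P) (hP : ∀ y ∈ P, s ≤ y ∧ y ≤ t) :
    ‖Γ P‖ ≤ C * (∑' m : ℕ, (min (2 / ((m : ℝ) + 1)) 1) ^ θ) * ω s t ^ θ := by
  have hω : 0 ≤ ω s t := hnonneg s t hs hst htT
  have hW : 0 ≤ ω s t ^ θ := Real.rpow_nonneg hω θ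
  have hf : ∀ m : ℕ, 0 ≤ (min (2 / ((m : ℝ) + 1)) 1) ^ θ := fun m =>
    Real.rpow_nonneg (le_min (by positivity) zero_le_one) θ
  have hle : ∀ m : ℕ, (min (2 / ((m : ℝ) + 1)) 1) ^ θ ≤ 2 ^ θ * (1 / ((m : ℝ) + 1) ^ θ) := by
    intro m
    have h1 : (0 : ℝ) < (m : ℝ) + 1 := by positivity
    have h2 : (min (2 / ((m : ℝ) + 1)) 1) ^ θ ≤ (2 / ((m : ℝ) + 1)) ^ θ :=
      Real.rpow_le_rpow (le_min (by positivity) zero_le_one) (min_le_left _ _)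
        (by linarith)
    have h3 : (2 / ((m : ℝ) + 1)) ^ θ = 2 ^ θ / ((m : ℝ) + 1) ^ θ :=
      Real.div_rpow (by norm_num) h1.le θ
    rw [h3] at h2
    exact h2.trans_eq (by ring)
  have hsummable : Summable (fun m : ℕ => (min (2 / ((m : ℝ) + 1)) 1) ^ θ) := by
    refine Summable.of_nonneg_of_le hf hle ?_
    have h0 : Summable (fun n : ℕ => 1 / ((n : ℝ)) ^ θ) :=
      Real.summable_one_div_nat_rpow.mpr hθ
    have h1 : Summable (fun n : ℕ => 1 / ((n : ℝ) + 1) ^ θ) := by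
      have h2 := (summable_nat_add_iff 1).mpr h0
      simpa using h2
    exact h1.mul_left _
  have hpartial : ∑ m ∈ Finset.range (P.card - 2), (min (2 / ((m : ℝ) + 1)) 1) ^ θ
      ≤ ∑' m : ℕ, (min (2 / ((m : ℝ) + 1)) 1) ^ θ :=
    Summable.sum_le_tsum _ (fun m _ => hf m) hsummable
  have haux := aux_point_removal T ω hnonneg hsuper θ C hθ hC s t hs hst htT Γ hbase hremove
    P.card P rfl hsP htP hP
  calc ‖Γ P‖ ≤ C * (∑ m ∈ Finset.range (P.card - 2), (min (2 / ((m : ℝ) + 1)) 1) ^ θ)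
        * ω s t ^ θ := haux
    _ ≤ C * (∑' m : ℕ, (min (2 / ((m : ℝ) + 1)) 1) ^ θ) * ω s t ^ θ :=
      mul_le_mul_of_nonneg_right (mul_le_mul_of_nonneg_left hpartial hC) hW
end

section
/- Let x : [s,t] → ℝ^d be a C^1 path, let n ≥ 1, let g : ℝ^e → L((ℝ^d)^{⊗n}, ℝ^e) be Lipschitz with Lipschitz constant L(g) (with respect to operator norm), and let Y : [s,t] → ℝ^e be continuous. Then |∫_{s<s_1<⋯<s_n<t} (g(Y_{s_1}) − g(Y_s))(x'(s_1) ⊗ ⋯ ⊗ x'(s_n)) ds_1⋯ds_n| ≤ L(g) · (sup_{u ∈ [s,t]} |Y_u − Y_s|) · (∫_s^t |x'(u)| du)^n / n!. -/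
open MeasureTheory

noncomputable section

/-- "snoc" tensor product `v ⊗ a`. -/
def snocT {d k : ℕ} (v : Tpow d k) (a : EuclideanSpace ℝ (Fin d)) : Tpow d (k + 1) :=
  WithLp.toLp 2 (fun i => v (fun j => i j.castSucc) * a (i (Fin.last k)))

lemma norm_consT {d k : ℕ} (a : EuclideanSpace ℝ (Fin d)) (w : Tpow d k) :
    ‖consT a w‖ = ‖a‖ * ‖w‖ := by
  rw [EuclideanSpace.norm_eq, EuclideanSpace.norm_eq, EuclideanSpace.norm_eq,
    ← Real.sqrt_mul (by positivity)]
  congr 1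
  rw [Fintype.sum_equiv (Fin.consEquiv fun _ : Fin (k+1) => Fin d).symm
    (fun i => ‖consT a w i‖ ^ 2)
    (fun p : Fin d × (Fin k → Fin d) => ‖a p.1‖ ^ 2 * ‖w p.2‖ ^ 2)
    (fun i => by simp only [Real.norm_eq_abs, sq_abs]; rw [← mul_pow]; rfl),
    Fintype.sum_prod_type, Finset.sum_mul_sum]

lemma norm_snocT {d k : ℕ} (v : Tpow d k) (a : EuclideanSpace ℝ (Fin d)) :
    ‖snocT v a‖ = ‖v‖ * ‖a‖ := by
  rw [EuclideanSpace.norm_eq, EuclideanSpace.norm_eq, EuclideanSpace.norm_eq,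
    ← Real.sqrt_mul (by positivity)]
  congr 1
  rw [Fintype.sum_equiv (Fin.snocEquiv fun _ : Fin (k+1) => Fin d).symm
    (fun i => ‖snocT v a i‖ ^ 2)
    (fun p : Fin d × (Fin k → Fin d) => ‖v p.2‖ ^ 2 * ‖a p.1‖ ^ 2)
    (fun i => by simp only [Real.norm_eq_abs, sq_abs]; rw [← mul_pow]; rfl),
    Fintype.sum_prod_type, Finset.sum_comm, Finset.sum_mul_sum]

lemma continuous_euclid {α : Type*} [TopologicalSpace α] {ι : Type*} [Fintype ι]
    {f : α → EuclideanSpace ℝ ι} (h : ∀ i, Continuous fun a => f a i) : Continuous f :=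
  (EuclideanSpace.equiv ι ℝ).symm.continuous.comp (continuous_pi h)

lemma norm_iterInt_zero {d : ℕ} (x : ℝ → EuclideanSpace ℝ (Fin d)) (s t : ℝ) :
    ‖iterInt x 0 s t‖ = 1 := by
  rw [EuclideanSpace.norm_eq]
  have : ∀ i : Fin 0 → Fin d, ‖iterInt x 0 s t i‖ ^ 2 = 1 := fun i => by
    show ‖(1:ℝ)‖ ^ 2 = 1; simp
  rw [Finset.sum_congr rfl fun i _ => this i, Finset.sum_const, Finset.card_univ]
  simp

lemma iterInt_cont_right {d : ℕ} {x : ℝ → EuclideanSpace ℝ (Fin d)}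
    (hx' : Continuous (deriv x)) (k : ℕ) (s : ℝ) :
    Continuous fun u => iterInt x k s u := by
  induction k with
  | zero => exact continuous_const
  | succ k ih =>
    apply continuous_euclid
    intro i
    show Continuous fun u => ∫ r in s..u,
      iterInt x k s r (fun j => i j.castSucc) * deriv x r (i (Fin.last k))
    have hc : Continuous fun r =>
        iterInt x k s r (fun j => i j.castSucc) * deriv x r (i (Fin.last k)) :=
      ((EuclideanSpace.proj (𝕜 := ℝ) (fun j : Fin k => i j.castSucc)).continuous.comp ih).mul
        ((EuclideanSpace.proj (𝕜 := ℝ) (i (Fin.last k))).continuous.comp hx')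
    exact intervalIntegral.continuous_primitive (fun a b => hc.intervalIntegrable a b) s

lemma snocT_cont {d k : ℕ} {α : Type*} [TopologicalSpace α]
    {v : α → Tpow d k} {a : α → EuclideanSpace ℝ (Fin d)}
    (hv : Continuous v) (ha : Continuous a) :
    Continuous fun u => snocT (v u) (a u) := by
  apply continuous_euclid
  intro i
  exact ((EuclideanSpace.proj (𝕜 := ℝ) (fun j : Fin k => i j.castSucc)).continuous.comp hv).mul
    ((EuclideanSpace.proj (𝕜 := ℝ) (i (Fin.last k))).continuous.comp ha)

lemma iterInt_succ_eq {d : ℕ} {x : ℝ → EuclideanSpace ℝ (Fin d)}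
    (hx' : Continuous (deriv x)) (k : ℕ) (s t : ℝ) :
    iterInt x (k+1) s t = ∫ u in s..t, snocT (iterInt x k s u) (deriv x u) := by
  have hF : Continuous fun u => snocT (iterInt x k s u) (deriv x u) :=
    snocT_cont (iterInt_cont_right hx' k s) hx'
  ext i
  have h := (EuclideanSpace.proj (𝕜 := ℝ) i).intervalIntegral_comp_comm (μ := volume)
    (hF.intervalIntegrable s t) (a := s) (b := t)
  simpa [snocT, iterInt] using h

lemma iterInt_norm_le {d : ℕ} {x : ℝ → EuclideanSpace ℝ (Fin d)}
    (hx' : Continuous (deriv x)) :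
    ∀ (k : ℕ) {s t : ℝ}, s ≤ t →
      ‖iterInt x k s t‖ ≤ (∫ u in s..t, ‖deriv x u‖) ^ k / (Nat.factorial k : ℝ) := by
  intro k
  induction k with
  | zero => intro s t _; simp [norm_iterInt_zero]
  | succ k ih =>
    intro s t hst
    have hnc : Continuous fun u => ‖deriv x u‖ := hx'.norm
    set φ : ℝ → ℝ := fun u => ∫ r in s..u, ‖deriv x r‖ with hφ
    have hφc : Continuous φ :=
      intervalIntegral.continuous_primitive (fun a b => hnc.intervalIntegrable a b) s
    have hφd : ∀ u, HasDerivAt φ (‖deriv x u‖) u := fun u =>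
      intervalIntegral.integral_hasDerivAt_right (hnc.intervalIntegrable s u)
        (hnc.stronglyMeasurableAtFilter volume (nhds u)) hnc.continuousAt
    have hφt : 0 ≤ φ t :=
      intervalIntegral.integral_nonneg hst (fun r _ => norm_nonneg _)
    set b : ℝ → ℝ := fun u => φ u ^ k / (Nat.factorial k : ℝ) * ‖deriv x u‖ with hb
    have hbc : Continuous b := ((hφc.pow k).div_const _).mul hnc
    have hG : ∀ u, HasDerivAt (fun v => φ v ^ (k+1) / (Nat.factorial (k+1) : ℝ)) (b u) u := by
      intro u
      have h1 := ((hφd u).fun_pow (k+1)).div_const (Nat.factorial (k+1) : ℝ)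
      convert h1 using 1
      · rfl
      · rfl
      have hk : ((k:ℝ)+1) ≠ 0 := by positivity
      have hf : (Nat.factorial k : ℝ) ≠ 0 := by positivity
      simp only [hb, Nat.factorial_succ, Nat.add_sub_cancel, Nat.cast_mul, Nat.cast_add,
        Nat.cast_one]
      field_simp
    have key : ∫ u in s..t, b u = φ t ^ (k+1) / (Nat.factorial (k+1) : ℝ) := by
      rw [intervalIntegral.integral_eq_sub_of_hasDerivAt (fun u _ => hG u)
        (hbc.intervalIntegrable s t)]
      have h0 : φ s = 0 := intervalIntegral.integral_same
      rw [h0]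
      simp
    calc ‖iterInt x (k+1) s t‖
        = ‖∫ u in s..t, snocT (iterInt x k s u) (deriv x u)‖ := by
          rw [iterInt_succ_eq hx']
      _ ≤ |∫ u in s..t, b u| := by
          apply intervalIntegral.norm_integral_le_abs_of_norm_le _ (hbc.intervalIntegrable s t)
          rw [Set.uIoc_of_le hst]
          refine (ae_restrict_mem measurableSet_Ioc).mono fun u hu => ?_
          rw [norm_snocT]
          have h0 : 0 ≤ φ u :=
            intervalIntegral.integral_nonneg hu.1.le (fun r _ => norm_nonneg _)
          exact mul_le_mul (ih hu.1.le) le_rfl (norm_nonneg _)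
            (div_nonneg (pow_nonneg h0 k) (by positivity))
      _ = (∫ u in s..t, ‖deriv x u‖) ^ (k+1) / (Nat.factorial (k+1) : ℝ) := by
          rw [key, abs_of_nonneg (div_nonneg (pow_nonneg hφt _) (by positivity))]

/-- Let `x : [s,t] → ℝ^d` be a C¹ path, `n = m+1 ≥ 1`,
`g : ℝ^e → L((ℝ^d)^{⊗n}, ℝ^e)` Lipschitz with constant `L` (operator norm), and
`Y : [s,t] → ℝ^e` continuous. Then
`|∫_{s<s₁<⋯<s_n<t} (g(Y_{s₁}) − g(Y_s))(x'(s₁) ⊗ ⋯ ⊗ x'(s_n)) ds₁⋯ds_n|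
  ≤ L (sup_{u∈[s,t]} |Y_u − Y_s|) (∫_s^t |x'(u)| du)^n / n!`,
the simplex integral being written (via Fubini) as
`∫_s^t (g(Y_u) − g(Y_s))(x'(u) ⊗ x^{n-1}_{u,t}) du`. -/
theorem simplex_integral_lipschitz_bound {d e : ℕ}
    (s t : ℝ) (hst : s ≤ t)
    (x : ℝ → EuclideanSpace ℝ (Fin d)) (hx : ContDiff ℝ 1 x)
    (m : ℕ)
    (g : EuclideanSpace ℝ (Fin e) → (Tpow d (m + 1) →L[ℝ] EuclideanSpace ℝ (Fin e)))
    (L : ℝ) (hL : 0 ≤ L)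
    (hg : ∀ y z : EuclideanSpace ℝ (Fin e), ‖g y - g z‖ ≤ L * ‖y - z‖)
    (Y : ℝ → EuclideanSpace ℝ (Fin e)) (hY : ContinuousOn Y (Set.Icc s t)) :
    ‖∫ u in s..t, (g (Y u) - g (Y s)) (consT (deriv x u) (iterInt x m u t))‖
      ≤ L * (⨆ u : Set.Icc s t, ‖Y u - Y s‖)
          * (∫ u in s..t, ‖deriv x u‖) ^ (m + 1) / (Nat.factorial (m + 1) : ℝ) := by
  have hx' : Continuous (deriv x) := hx.continuous_deriv le_rfl
  have hnc : Continuous fun u => ‖deriv x u‖ := hx'.norm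
  set M : ℝ := ⨆ u : Set.Icc s t, ‖Y u - Y s‖ with hM
  have hbdd : BddAbove (Set.range fun u : Set.Icc s t => ‖Y u - Y s‖) := by
    have hcont : ContinuousOn (fun u => ‖Y u - Y s‖) (Set.Icc s t) :=
      (hY.sub continuousOn_const).norm
    have h := (isCompact_Icc.image_of_continuousOn hcont).bddAbove
    rwa [Set.image_eq_range] at h
  have hMle : ∀ u ∈ Set.Icc s t, ‖Y u - Y s‖ ≤ M := fun u hu => le_ciSup hbdd ⟨u, hu⟩
  have hM0 : 0 ≤ M := le_trans (by simp) (hMle s ⟨le_refl s, hst⟩)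
  set ψ : ℝ → ℝ := fun u => ∫ r in u..t, ‖deriv x r‖ with hψ
  have hψc : Continuous ψ := by
    have h := (intervalIntegral.continuous_primitive (μ := volume)
      (fun a b => hnc.intervalIntegrable a b) t).neg
    have he : ψ = fun u => -∫ r in t..u, ‖deriv x r‖ :=
      funext fun u => intervalIntegral.integral_symm t u
    rw [he]
    exact h
  have hψd : ∀ u, HasDerivAt ψ (-‖deriv x u‖) u := fun u =>
    intervalIntegral.integral_hasDerivAt_left (hnc.intervalIntegrable u t)
      (hnc.stronglyMeasurableAtFilter volume (nhds u)) hnc.continuousAt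
  have hψs0 : 0 ≤ ψ s := intervalIntegral.integral_nonneg hst fun r _ => norm_nonneg _
  set b : ℝ → ℝ := fun u => L * M * (ψ u ^ m / (Nat.factorial m : ℝ) * ‖deriv x u‖) with hbdef
  have hbc : Continuous b := continuous_const.mul (((hψc.pow m).div_const _).mul hnc)
  have hH : ∀ u, HasDerivAt
      (fun v => L * M * -(ψ v ^ (m+1) / (Nat.factorial (m+1) : ℝ))) (b u) u := by
    intro u
    have h1 := ((((hψd u).fun_pow (m+1)).div_const (Nat.factorial (m+1) : ℝ)).fun_neg).const_mul (L*M)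
    convert h1 using 1
    · rfl
    · rfl
    have hf : (Nat.factorial m : ℝ) ≠ 0 := by positivity
    have hm1 : ((m:ℝ)+1) ≠ 0 := by positivity
    simp only [hbdef, Nat.factorial_succ, Nat.add_sub_cancel, Nat.cast_mul, Nat.cast_add,
      Nat.cast_one]
    field_simp
  have key : ∫ u in s..t, b u = L * M * (ψ s ^ (m+1) / (Nat.factorial (m+1) : ℝ)) := by
    rw [intervalIntegral.integral_eq_sub_of_hasDerivAt (fun u _ => hH u)
      (hbc.intervalIntegrable s t)]
    have hψt : ψ t = 0 := intervalIntegral.integral_same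
    rw [hψt]
    ring
  calc ‖∫ u in s..t, (g (Y u) - g (Y s)) (consT (deriv x u) (iterInt x m u t))‖
      ≤ |∫ u in s..t, b u| := by
        apply intervalIntegral.norm_integral_le_abs_of_norm_le _ (hbc.intervalIntegrable s t)
        rw [Set.uIoc_of_le hst]
        refine (ae_restrict_mem measurableSet_Ioc).mono fun u hu => ?_
        have hu' : u ∈ Set.Icc s t := ⟨hu.1.le, hu.2⟩
        have h1 : ‖(g (Y u) - g (Y s)) (consT (deriv x u) (iterInt x m u t))‖
            ≤ ‖g (Y u) - g (Y s)‖ * ‖consT (deriv x u) (iterInt x m u t)‖ :=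
          ContinuousLinearMap.le_opNorm _ _
        rw [norm_consT] at h1
        refine h1.trans ?_
        have h2 : ‖g (Y u) - g (Y s)‖ ≤ L * M :=
          (hg _ _).trans (mul_le_mul_of_nonneg_left (hMle u hu') hL)
        have h3 : ‖iterInt x m u t‖ ≤ ψ u ^ m / (Nat.factorial m : ℝ) :=
          iterInt_norm_le hx' m hu.2
        have hψu0 : 0 ≤ ψ u := intervalIntegral.integral_nonneg hu.2 fun r _ => norm_nonneg _
        calc ‖g (Y u) - g (Y s)‖ * (‖deriv x u‖ * ‖iterInt x m u t‖)
            ≤ (L * M) * (‖deriv x u‖ * (ψ u ^ m / (Nat.factorial m : ℝ))) :=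
              mul_le_mul h2 (mul_le_mul_of_nonneg_left h3 (norm_nonneg _))
                (by positivity) (mul_nonneg hL hM0)
          _ = b u := by rw [hbdef]; ring
    _ = L * M * (ψ s ^ (m+1) / (Nat.factorial (m+1) : ℝ)) := by
        rw [key]
        exact abs_of_nonneg (mul_nonneg (mul_nonneg hL hM0)
          (div_nonneg (pow_nonneg hψs0 _) (by positivity)))
    _ = L * M * (∫ u in s..t, ‖deriv x u‖) ^ (m + 1) / (Nat.factorial (m + 1) : ℝ) := by
        rw [hψ]
        ring

end
end
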